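/- The alternative set of functions B̃₁,…,B̃₂₈ defined by B̃ᵢ = Bᵢ for i ≤ 21, B̃₂₂ = 2B₂₂ − B₂₃ + B₂₈/3 (and symmetric formulas for indices 23–27), and B̃₂₈ = −B₂₈, is obtained by an invertible linear change of basis; the conversion matrix C satisfies ‖C‖_∞ = ‖C⁻¹‖_∞ = 3, so B̃₁,…,B̃₂₈ is again a basis of S₃²(Δ_{WS₃}) forming a partition of unity, and (1/111)‖b̃‖_∞ ≤ ‖Σᵢ b̃ᵢ B̃ᵢ‖_∞ ≤ 3‖b̃‖_∞. -/
import Mathlib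


open MeasureTheory

/-- The plane `ℝ²` as a Euclidean space. -/
abbrev V2 := EuclideanSpace ℝ (Fin 2)

/-- The (closed) triangle with vertices `p 0, p 1, p 2`. -/
def tri (p : Fin 3 → V2) : Set V2 := convexHull ℝ (Set.range p)

/-- The `3·3 = 9` boundary points of the WS₃ split: the vertices together with the
trisection points of the edges. -/
def wsPts (p : Fin 3 → V2) : Set V2 :=
  {x | ∃ i j : Fin 3, ∃ k : Fin 4,
    x = ((k : ℝ) / 3) • p i + (1 - (k : ℝ) / 3) • p j}

/-- The union of all the lines of the complete graph on the 9 boundary points of the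
WS₃ split. -/
def cutLines (p : Fin 3 → V2) : Set V2 :=
  {x | ∃ a ∈ wsPts p, ∃ b ∈ wsPts p, a ≠ b ∧
    x ∈ (affineSpan ℝ ({a, b} : Set V2) : Set V2)}

/-- `g` is (the restriction of) a bivariate polynomial of total degree at most `d`. -/
def IsPolyDeg (d : ℕ) (g : V2 → ℝ) : Prop :=
  ∃ q : MvPolynomial (Fin 2) ℝ, q.totalDegree ≤ d ∧
    ∀ z : V2, g z = MvPolynomial.eval (fun i => z i) q

/-- The spline space `S₃²(Δ_{WS₃})`: functions (extended by zero outside `Δ`) that are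
`C²` on the triangle `Δ` and coincide with a cubic polynomial on every open region of
the WS₃ split (the connected components of the interior of `Δ` minus the complete
graph of lines through the 9 boundary points). -/
def splineSpace (p : Fin 3 → V2) : Set (V2 → ℝ) :=
  {f | ContDiffOn ℝ 2 f (tri p) ∧
    (∀ x ∈ interior (tri p) \ cutLines p,
      ∃ g, IsPolyDeg 3 g ∧
        Set.EqOn f g (connectedComponentIn (interior (tri p) \ cutLines p) x)) ∧
    ∀ x ∉ tri p, f x = 0}

/-- The 28 relative scaling weights of the simplex spline basis on the WS₃ split. -/
noncomputable def wvec : Fin 28 → ℝ :=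
  ![1/6, 1/6, 1/6, 1/3, 1/3, 1/3, 1/3, 1/3, 1/3, 1/2, 1/2, 1/2, 1/2, 1/2, 1/2,
    2/3, 2/3, 2/3, 5/6, 5/6, 5/6, 2/3, 2/3, 2/3, 2/3, 2/3, 2/3, 1]

/-- Barycentric coordinates (w.r.t. `Δ`) of the 28 domain points of the simplex
spline basis (0-indexed; entry `i` corresponds to the paper's `ξ_{i+1}`). -/
noncomputable def bary : Fin 28 → Fin 3 → ℝ :=
  ![![1, 0, 0], ![0, 1, 0], ![0, 0, 1],
    ![8/9, 1/9, 0], ![8/9, 0, 1/9], ![0, 8/9, 1/9],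
    ![1/9, 8/9, 0], ![1/9, 0, 8/9], ![0, 1/9, 8/9],
    ![2/3, 1/3, 0], ![2/3, 0, 1/3], ![0, 2/3, 1/3],
    ![1/3, 2/3, 0], ![1/3, 0, 2/3], ![0, 1/3, 2/3],
    ![7/9, 1/9, 1/9], ![1/9, 7/9, 1/9], ![1/9, 1/9, 7/9],
    ![7/15, 7/15, 1/15], ![1/15, 7/15, 7/15], ![7/15, 1/15, 7/15],
    ![5/9, 1/3, 1/9], ![5/9, 1/9, 1/3], ![1/9, 5/9, 1/3],
    ![1/3, 5/9, 1/9], ![1/3, 1/9, 5/9], ![1/9, 1/3, 5/9],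
    ![1/3, 1/3, 1/3]]

/-- The domain points of the simplex spline basis on the triangle `p`. -/
noncomputable def dpt (p : Fin 3 → V2) (i : Fin 28) : V2 :=
  ∑ k : Fin 3, bary i k • p k

/-- The sup-norm of a function over the triangle `p`. -/
noncomputable def supTri (p : Fin 3 → V2) (f : V2 → ℝ) : ℝ :=
  sSup ((fun x => |f x|) '' tri p)

/-- The alternative basis `B̃` (0-indexed): `B̃ᵢ = Bᵢ` for `i ≤ 20` (paper `i ≤ 21`),
`B̃₂₁ = 2B₂₁ − B₂₂ + B₂₇/3` and the symmetric formulas for the pairs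
`(21,22), (23,24), (25,26)`, and `B̃₂₇ = −B₂₇` (paper indices 22–28). -/
noncomputable def altB (B : Fin 28 → V2 → ℝ) (i : Fin 28) : V2 → ℝ :=
  if i.val ≤ 20 then B i
  else if i.val = 27 then fun x => -(B 27 x)
  else if i.val % 2 = 1 then fun x => 2 * B i x - B (i + 1) x + B 27 x / 3
  else fun x => 2 * B i x - B (i - 1) x + B 27 x / 3


noncomputable def Cmat : Matrix (Fin 28) (Fin 28) ℝ := Matrix.of fun i j =>
  if i.val ≤ 20 then (if j = i then 1 else 0)
  else if i.val = 27 then (if j.val = 27 then -1 else if 21 ≤ j.val then 1/3 else 0)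
  else if j = i then 2/3
  else if (i.val % 2 = 1 ∧ j.val = i.val + 1) ∨ (i.val % 2 = 0 ∧ j.val + 1 = i.val) then 1/3 else 0

noncomputable def Dmat : Matrix (Fin 28) (Fin 28) ℝ := Matrix.of fun i j =>
  if j.val ≤ 20 then (if i = j then 1 else 0)
  else if j.val = 27 then (if i.val = 27 then -1 else 0)
  else if i = j then 2
  else if i.val = 27 then 1/3
  else if (j.val % 2 = 1 ∧ i.val = j.val + 1) ∨ (j.val % 2 = 0 ∧ i.val + 1 = j.val) then -1 else 0

noncomputable def cvec (v : Fin 28 → ℝ) : Fin 28 → ℝ := fun i =>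
  if i.val ≤ 20 then v i
  else if i.val = 27 then (v 21 + v 22 + v 23 + v 24 + v 25 + v 26)/3 - v 27
  else if i.val % 2 = 1 then (2 * v i + v (i+1))/3 else (2 * v i + v (i-1))/3

noncomputable def dvec (v : Fin 28 → ℝ) : Fin 28 → ℝ := fun i =>
  if i.val ≤ 20 then v i
  else if i.val = 27 then (v 21 + v 22 + v 23 + v 24 + v 25 + v 26)/3 - v 27
  else if i.val % 2 = 1 then 2 * v i - v (i+1) else 2 * v i - v (i-1)

set_option maxHeartbeats 4000000 in
lemma hCvec (v : Fin 28 → ℝ) : Cmat.mulVec v = cvec v := by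
  funext i
  fin_cases i <;>
    (simp (config := { decide := true }) [Cmat, cvec, Matrix.mulVec, dotProduct,
      Fin.sum_univ_succ, Fin.succ]; try ring)

set_option maxHeartbeats 4000000 in
lemma hDvec (v : Fin 28 → ℝ) : Dmat.mulVec v = dvec v := by
  funext i
  fin_cases i <;>
    (simp (config := { decide := true }) [Dmat, dvec, Matrix.mulVec, dotProduct,
      Fin.sum_univ_succ, Fin.succ]; try ring)

set_option maxHeartbeats 1000000 in
lemma hcomp (v : Fin 28 → ℝ) : Cmat.mulVec (Dmat.mulVec v) = v := by
  rw [hDvec, hCvec]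
  funext i
  fin_cases i <;> (simp (config := { decide := true }) [cvec, dvec]; try ring)

lemma hCD : Cmat * Dmat = 1 := by
  ext i j
  have h := congrFun (hcomp (Pi.single j 1)) i
  rw [Matrix.mulVec_mulVec] at h
  simp only [Matrix.mulVec_single, mul_one] at h
  simpa [Matrix.one_apply, Pi.single_apply] using h

lemma hCinv : Cmat⁻¹ = Dmat := Matrix.inv_eq_right_inv hCD

set_option maxHeartbeats 4000000 in
lemma rowC (i : Fin 28) : ∑ j, |Cmat i j| = if i.val = 27 then 3 else 1 := by
  fin_cases i <;>
    simp (config := { decide := true }) [Cmat, Fin.sum_univ_succ, Fin.succ] <;>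
    norm_num [abs_of_nonneg]

set_option maxHeartbeats 4000000 in
lemma rowD (i : Fin 28) : ∑ j, |Dmat i j| = if i.val ≤ 20 then 1 else 3 := by
  fin_cases i <;>
    simp (config := { decide := true }) [Dmat, Fin.sum_univ_succ, Fin.succ] <;>
    norm_num [abs_of_nonneg]

lemma supC : (⨆ i, ∑ j, |Cmat i j|) = 3 := by
  apply le_antisymm
  · exact ciSup_le fun i => by rw [rowC]; split <;> norm_num
  · calc (3:ℝ) = ∑ j, |Cmat 27 j| := by
          rw [rowC]; simp (config := { decide := true })
      _ ≤ ⨆ i, ∑ j, |Cmat i j| :=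
          le_ciSup (f := fun i : Fin 28 => ∑ j, |Cmat i j|)
            (Set.Finite.bddAbove (Set.finite_range _)) (27 : Fin 28)

lemma supD : (⨆ i, ∑ j, |Cmat⁻¹ i j|) = 3 := by
  rw [hCinv]
  apply le_antisymm
  · exact ciSup_le fun i => by rw [rowD]; split <;> norm_num
  · calc (3:ℝ) = ∑ j, |Dmat 27 j| := by
          rw [rowD]; simp (config := { decide := true })
      _ ≤ ⨆ i, ∑ j, |Dmat i j| :=
          le_ciSup (f := fun i : Fin 28 => ∑ j, |Dmat i j|)
            (Set.Finite.bddAbove (Set.finite_range _)) (27 : Fin 28)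

set_option maxHeartbeats 8000000 in
lemma absC (v : Fin 28 → ℝ) (s : ℝ) (hv : ∀ j, |v j| ≤ s) (i : Fin 28) :
    |Cmat.mulVec v i| ≤ 3 * s := by
  have H : ∀ j, -s ≤ v j ∧ v j ≤ s := fun j => abs_le.mp (hv j)
  rw [hCvec, abs_le]
  fin_cases i <;> (simp (config := { decide := true }) [cvec]) <;>
    constructor <;> linarith [(H 0).1, (H 0).2, (H 1).1, (H 1).2, (H 2).1, (H 2).2, (H 3).1, (H 3).2, (H 4).1, (H 4).2, (H 5).1, (H 5).2, (H 6).1, (H 6).2, (H 7).1, (H 7).2, (H 8).1, (H 8).2, (H 9).1, (H 9).2, (H 10).1, (H 10).2, (H 11).1, (H 11).2, (H 12).1, (H 12).2, (H 13).1, (H 13).2, (H 14).1, (H 14).2, (H 15).1, (H 15).2, (H 16).1, (H 16).2, (H 17).1, (H 17).2, (H 18).1, (H 18).2, (H 19).1, (H 19).2, (H 20).1, (H 20).2, (H 21).1, (H 21).2, (H 22).1, (H 22).2, (H 23).1, (H 23).2, (H 24).1, (H 24).2, (H 25).1, (H 25).2, (H 26).1, (H 26).2, (H 27).1, (H 27)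.2]

set_option maxHeartbeats 8000000 in
lemma absD (v : Fin 28 → ℝ) (s : ℝ) (hv : ∀ j, |v j| ≤ s) (i : Fin 28) :
    |Dmat.mulVec v i| ≤ 3 * s := by
  have H : ∀ j, -s ≤ v j ∧ v j ≤ s := fun j => abs_le.mp (hv j)
  rw [hDvec, abs_le]
  fin_cases i <;> (simp (config := { decide := true }) [dvec]) <;>
    constructor <;> linarith [(H 0).1, (H 0).2, (H 1).1, (H 1).2, (H 2).1, (H 2).2, (H 3).1, (H 3).2, (H 4).1, (H 4).2, (H 5).1, (H 5).2, (H 6).1, (H 6).2, (H 7).1, (H 7).2, (H 8).1, (H 8).2, (H 9).1, (H 9).2, (H 10).1, (H 10).2, (H 11).1, (H 11).2, (H 12).1, (H 12).2, (H 13).1, (H 13).2, (H 14).1, (H 14).2, (H 15).1, (H 15).2, (H 16).1, (H 16).2, (H 17).1, (H 17).2, (H 18).1, (H 18).2, (H 19).1, (H 19).2, (H 20).1, (H 20).2, (H 21).1, (H 21).2, (H 22).1, (H 22).2, (H 23).1, (H 23).2, (H 24).1, (H 24).2, (H 25).1, (H 25).2, (H 26).1, (H 26).2, (H 27).1, (H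 27).2]

lemma hd1 : Dmat.mulVec (fun _ => (1:ℝ)) = fun _ => (1:ℝ) := by
  rw [hDvec]
  funext i
  fin_cases i <;> simp (config := { decide := true }) [dvec] <;> norm_num

set_option maxHeartbeats 4000000 in
lemma key (B : Fin 28 → V2 → ℝ) (b : Fin 28 → ℝ) (x : V2) :
    ∑ i, b i * B i x = ∑ i, Cmat.mulVec b i * altB B i x := by
  rw [hCvec]
  simp (config := { decide := true }) [altB, cvec, Fin.sum_univ_succ, Fin.succ]
  ring

lemma key' (B : Fin 28 → V2 → ℝ) (g : Fin 28 → ℝ) (x : V2) :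
    ∑ i, g i * altB B i x = ∑ i, Dmat.mulVec g i * B i x := by
  have h := key B (Dmat.mulVec g) x
  rw [hcomp] at h
  exact h.symm

lemma sum_single_mul (f : Fin 28 → ℝ) (j : Fin 28) :
    ∑ i, (Pi.single j 1 : Fin 28 → ℝ) i * f i = f j := by
  simp [Pi.single_apply, ite_mul]

/-- the alternative functions `B̃ᵢ` are obtained from `B` by an
invertible linear change of basis whose conversion matrix `C` (with `b̃ = C b`)
satisfies `‖C‖_∞ = ‖C⁻¹‖_∞ = 3`; hence `B̃₁,…,B̃₂₈` is again a basis of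
`S₃²(Δ_{WS₃})`, forms a partition of unity, and
`(1/111)‖b̃‖_∞ ≤ ‖Σᵢ b̃ᵢB̃ᵢ‖_∞ ≤ 3‖b̃‖_∞`. -/
theorem alternative_basis (p : Fin 3 → V2) (hp : AffineIndependent ℝ p)
    (B : Fin 28 → V2 → ℝ)
    (hBS : ∀ i, B i ∈ splineSpace p)
    (hpos : ∀ i, ∀ x ∈ tri p, 0 ≤ B i x)
    (hPU : ∀ x ∈ tri p, ∑ i, B i x = 1)
    (hbasis : LinearIndependent ℝ B ∧
      Submodule.span ℝ (Set.range B) = Submodule.span ℝ (splineSpace p))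
    (hstab : ∀ b : Fin 28 → ℝ,
      (1 / 37) * (⨆ i, |b i|) ≤ supTri p (fun x => ∑ i, b i * B i x) ∧
      supTri p (fun x => ∑ i, b i * B i x) ≤ ⨆ i, |b i|) :
    (∃ C : Matrix (Fin 28) (Fin 28) ℝ, IsUnit C.det ∧
      (∀ b : Fin 28 → ℝ, ∀ x : V2,
        ∑ i, b i * B i x = ∑ i, C.mulVec b i * altB B i x) ∧
      (⨆ i, ∑ j, |C i j|) = 3 ∧ (⨆ i, ∑ j, |C⁻¹ i j|) = 3) ∧
    (LinearIndependent ℝ (altB B) ∧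
      Submodule.span ℝ (Set.range (altB B)) = Submodule.span ℝ (splineSpace p)) ∧
    (∀ x ∈ tri p, ∑ i, altB B i x = 1) ∧
    (∀ bt : Fin 28 → ℝ,
      (1 / 111) * (⨆ i, |bt i|) ≤ supTri p (fun x => ∑ i, bt i * altB B i x) ∧
      supTri p (fun x => ∑ i, bt i * altB B i x) ≤ 3 * ⨆ i, |bt i|) := by
  
  obtain ⟨hli, hspan⟩ := hbasis
  have hbdd : ∀ (w : Fin 28 → ℝ) (i : Fin 28), |w i| ≤ ⨆ k, |w k| := fun w i =>
    le_ciSup (f := fun k => |w k|) (Set.Finite.bddAbove (Set.finite_range _)) i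
  refine ⟨⟨Cmat, Matrix.isUnit_det_of_right_inverse hCD, fun b x => key B b x, supC, supD⟩,
    ⟨?_, ?_⟩, ?_, ?_⟩
  · -- linear independence
    rw [Fintype.linearIndependent_iff]
    intro g hg
    have hzero : ∀ x : V2, ∑ i, Dmat.mulVec g i * B i x = 0 := by
      intro x
      rw [← key' B g x]
      have h := congrFun hg x
      simpa using h
    have hDg : Dmat.mulVec g = 0 := by
      have hli' := Fintype.linearIndependent_iff.mp hli
      refine funext (hli' (Dmat.mulVec g) ?_)
      funext x
      simpa using hzero x
    intro i
    have hgi : g = Cmat.mulVec (Dmat.mulVec g) := (hcomp g).symm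
    rw [hgi, hDg]
    simp
  · -- span
    rw [← hspan]
    apply le_antisymm
    · rw [Submodule.span_le]
      rintro _ ⟨j, rfl⟩
      have hfun : altB B j = ∑ i, (Dmat i j) • B i := by
        funext x
        have h := key' B (Pi.single j 1) x
        rw [sum_single_mul (fun i => altB B i x) j] at h
        simp only [Matrix.mulVec_single, mul_one] at h
        rw [h]
        simp
      rw [hfun]
      exact Submodule.sum_mem _ fun i _ =>
        Submodule.smul_mem _ _ (Submodule.subset_span ⟨i, rfl⟩)
    · rw [Submodule.span_le]
      rintro _ ⟨j, rfl⟩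
      have hfun : B j = ∑ i, (Cmat i j) • altB B i := by
        funext x
        have h := key B (Pi.single j 1) x
        rw [sum_single_mul (fun i => B i x) j] at h
        simp only [Matrix.mulVec_single, mul_one] at h
        rw [h]
        simp
      rw [hfun]
      exact Submodule.sum_mem _ fun i _ =>
        Submodule.smul_mem _ _ (Submodule.subset_span ⟨i, rfl⟩)
  · -- partition of unity
    intro x hx
    have h := key' B (fun _ => 1) x
    rw [hd1] at h
    simp only [one_mul] at h
    rw [h]
    exact hPU x hx
  · -- stability
    intro bt
    have hfun : (fun x => ∑ i, bt i * altB B i x)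
        = (fun x => ∑ i, Dmat.mulVec bt i * B i x) := funext fun x => key' B bt x
    constructor
    · have h1 := (hstab (Dmat.mulVec bt)).1
      have h2 : ∀ i, |bt i| ≤ 3 * ⨆ k, |Dmat.mulVec bt k| := by
        intro i
        have h3 := absC (Dmat.mulVec bt) (⨆ k, |Dmat.mulVec bt k|) (hbdd _) i
        rwa [hcomp] at h3
      have h4 : (⨆ i, |bt i|) ≤ 3 * ⨆ k, |Dmat.mulVec bt k| := ciSup_le h2
      rw [hfun]
      linarith
    · have h1 := (hstab (Dmat.mulVec bt)).2
      have h2 : (⨆ i, |Dmat.mulVec bt i|) ≤ 3 * ⨆ i, |bt i| :=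
        ciSup_le fun i => absD bt (⨆ k, |bt k|) (hbdd bt) i
      rw [hfun]
      linarith
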